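/- arXiv:1109.0001 — 2 statements merged into one kernel-verified Lean document; each statement's English description precedes it below -/
import Mathlib

section
/- The truncated cube has no Hamiltonian vertex-face tour: there is no closed alternating sequence of vertices and faces (v_1, f_1, v_2, f_2, ..., v_k, f_k, v_1), visiting every face exactly once, such that consecutive vertices v_i, v_{i+1} are distinct and both incident to f_i. Indeed, any such tour would require each of the 8 triangular faces of the truncated cube to be separated by octagonal faces, but the 6 octagons admit at most a bounded number of tour-visits insufficient to accommodate all 8 triangles consecutively without two triangles being adjacent in the tour, which is impossible since no two triangles of the truncated cube share a vertex. -/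
/-- An abstract plane graph, given by its vertices, faces, the vertex set of each
face boundary, and the relation of two faces sharing an edge. -/
structure PlaneGraph where
  Vert : Type
  Face : Type
  vertFin : Fintype Vert
  faceFin : Fintype Face
  boundary : Face → Finset Vert
  shareEdge : Face → Face → Prop

attribute [instance] PlaneGraph.vertFin PlaneGraph.faceFin

namespace PlaneGraph

variable (G : PlaneGraph)

/-- The number of sides of a face. -/
def size (f : G.Face) : ℕ := (G.boundary f).card

/-- A face is triangular if it has exactly three vertices. -/
def Triangular (f : G.Face) : Prop := G.size f = 3

/-- A plane graph is tight if no two non-triangular faces share a vertex. -/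
def Tight : Prop :=
  ∀ f g : G.Face, f ≠ g → ¬ G.Triangular f → ¬ G.Triangular g →
    Disjoint (G.boundary f) (G.boundary g)

/-- One closed component `(v₁, f₁, v₂, f₂, …, v_k, f_k, v₁)` of a vertex-face tour:
consecutive vertices (cyclically) are distinct and both incident to the face between them. -/
def TourComp (c : List (G.Vert × G.Face)) : Prop :=
  c ≠ [] ∧ ∀ i : Fin c.length,
    (c.get i).1 ≠ (c.get ⟨((i : ℕ) + 1) % c.length, Nat.mod_lt _ i.pos⟩).1 ∧
    (c.get i).1 ∈ G.boundary (c.get i).2 ∧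
    (c.get ⟨((i : ℕ) + 1) % c.length, Nat.mod_lt _ i.pos⟩).1 ∈ G.boundary (c.get i).2

/-- A spanning vertex-face tour: a disjoint union of closed alternating vertex-face
sequences in which every face of `G` appears exactly once. -/
def SpanningTour (T : List (List (G.Vert × G.Face))) : Prop :=
  (∀ c ∈ T, G.TourComp c) ∧
  ∀ f : G.Face, ∃! i : Fin T.flatten.length, (T.flatten.get i).2 = f

/-- A Hamiltonian vertex-face tour is a connected (single-component) spanning tour. -/
def HamiltonianTour (c : List (G.Vert × G.Face)) : Prop := G.SpanningTour [c]

/-- The tour `T` contains the pattern `(v, f, v')`. -/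
def Contains (T : List (List (G.Vert × G.Face))) (v : G.Vert) (f : G.Face)
    (v' : G.Vert) : Prop :=
  ∃ c ∈ T, ∃ i : Fin c.length, c.get i = (v, f) ∧
    (c.get ⟨((i : ℕ) + 1) % c.length, Nat.mod_lt _ i.pos⟩).1 = v'

end PlaneGraph

/-! Reading the faces of a Hamiltonian tour in order gives a cyclic permutation of the faces
under which each face shares a vertex with its successor. Since no two triangles share a
vertex, the successor of a triangle is not a triangle; so the successor map injects the 8
triangles into the 6 remaining faces. -/

theorem Set.two_mul_ncard_le_of_mapsTo_compl {α : Type*} [Finite α] {f : α → α}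
    (hf : Function.Injective f) {s : Set α} (h : Set.MapsTo f s sᶜ) :
    2 * s.ncard ≤ Nat.card α := by
  have hle : s.ncard ≤ sᶜ.ncard := Set.ncard_le_ncard_of_injOn f h hf.injOn
  have hsum : s.ncard + sᶜ.ncard = Nat.card α := Set.ncard_add_ncard_compl s
  omega

theorem finRotate_eq_mk {n : ℕ} (i : Fin n) :
    finRotate n i = ⟨((i : ℕ) + 1) % n, Nat.mod_lt _ i.pos⟩ := by
  have := i.neZero
  ext
  rw [finRotate_apply, Fin.val_add, Fin.val_one', Nat.add_mod_mod]

namespace PlaneGraph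

variable {G : PlaneGraph} {c : List (G.Vert × G.Face)}

namespace TourComp

theorem finRotate_ne (hc : G.TourComp c) (i : Fin c.length) : finRotate _ i ≠ i := by
  intro h
  have hne := (hc.2 i).1
  rw [← finRotate_eq_mk, h] at hne
  exact hne rfl

theorem not_disjoint_boundary_finRotate (hc : G.TourComp c) (i : Fin c.length) :
    ¬ Disjoint (G.boundary (c.get i).2) (G.boundary (c.get (finRotate _ i)).2) := by
  have hmem := (hc.2 i).2.2
  have hmem' := (hc.2 (finRotate _ i)).2.1
  rw [← finRotate_eq_mk] at hmem
  exact Finset.not_disjoint_iff.mpr ⟨_, hmem, hmem'⟩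

end TourComp

namespace HamiltonianTour

theorem tourComp (hc : G.HamiltonianTour c) : G.TourComp c :=
  hc.1 c (List.mem_singleton_self c)

theorem bijective_snd_get (hc : G.HamiltonianTour c) :
    Function.Bijective fun i : Fin c.length => (c.get i).2 := by
  have huniq := hc.2
  rw [List.flatten_singleton] at huniq
  exact Function.bijective_iff_existsUnique _ |>.mpr huniq

noncomputable def faceEquiv (hc : G.HamiltonianTour c) : Fin c.length ≃ G.Face :=
  Equiv.ofBijective _ hc.bijective_snd_get

noncomputable def nextFace (hc : G.HamiltonianTour c) : Equiv.Perm G.Face :=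
  hc.faceEquiv.permCongr (finRotate _)

theorem nextFace_ne (hc : G.HamiltonianTour c) (f : G.Face) : hc.nextFace f ≠ f := by
  intro h
  apply hc.tourComp.finRotate_ne (hc.faceEquiv.symm f)
  apply hc.faceEquiv.injective
  simpa [nextFace] using h

theorem not_disjoint_boundary_nextFace (hc : G.HamiltonianTour c) (f : G.Face) :
    ¬ Disjoint (G.boundary f) (G.boundary (hc.nextFace f)) := by
  convert hc.tourComp.not_disjoint_boundary_finRotate (hc.faceEquiv.symm f) using 3
  · exact (hc.faceEquiv.apply_symm_apply f).symm
  · rfl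

end HamiltonianTour

end PlaneGraph

theorem stmt_7_general (G : PlaneGraph)
    (hfaces : Fintype.card G.Face = 14)
    (htris : {f : G.Face | G.Triangular f}.ncard = 8)
    (htridisj : ∀ f g : G.Face, G.Triangular f → G.Triangular g → f ≠ g →
      Disjoint (G.boundary f) (G.boundary g)) :
    ¬ ∃ c, G.HamiltonianTour c := by
  rintro ⟨c, hc⟩
  have hmaps : Set.MapsTo hc.nextFace {f | G.Triangular f} {f | G.Triangular f}ᶜ :=
    fun f hf hnext => hc.not_disjoint_boundary_nextFace f
      (htridisj _ _ hf hnext (hc.nextFace_ne f).symm)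
  have hle := Set.two_mul_ncard_le_of_mapsTo_compl hc.nextFace.injective hmaps
  rw [htris, Nat.card_eq_fintype_card, hfaces] at hle
  omega

/-- The truncated cube — a plane graph with 14 faces, of which 8 are
triangles and the rest are octagons, in which no two triangular faces share a
vertex — has no Hamiltonian vertex-face tour: in any such tour the faces flanking a
triangle would have to be octagons, and a cyclic sequence of 14 faces with 8
triangles, no two adjacent, is impossible since 8 > 6. -/
theorem stmt_7 (G : PlaneGraph)
    (hfaces : Fintype.card G.Face = 14)
    (htris : {f : G.Face | G.Triangular f}.ncard = 8)
    (hocts : ∀ f : G.Face, ¬ G.Triangular f → G.size f = 8)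
    (htridisj : ∀ f g : G.Face, G.Triangular f → G.Triangular g → f ≠ g →
      Disjoint (G.boundary f) (G.boundary g)) :
    ¬ ∃ c, G.HamiltonianTour c :=
  stmt_7_general G hfaces htris htridisj
end

section
/- The standard triangulation on n ≥ 4 vertices admits a Hamiltonian vertex-face tour: a closed alternating sequence of vertices and faces in which every face appears exactly once and consecutive vertices flanking each face are distinct vertices incident to that face. -/
/-- A (combinatorial) triangulation of the sphere on vertex set `Fin n`: a collection
of triangles such that every edge lying on a triangle lies on exactly two triangles,
every vertex lies on a triangle, and the triangles are connected through shared
edges.  (Being a *sphere* triangulation is captured by Euler's formula, imposed as a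
hypothesis where needed.) -/
structure SphereTriangulation (n : ℕ) where
  faces : Finset (Finset (Fin n))
  three : ∀ t ∈ faces, t.card = 3
  edge_two : ∀ e : Finset (Fin n), e.card = 2 → (∃ t ∈ faces, e ⊆ t) →
    (faces.filter fun t => e ⊆ t).card = 2
  spans : ∀ v : Fin n, ∃ t ∈ faces, v ∈ t
  conn : ∀ t ∈ faces, ∀ t' ∈ faces,
    Relation.ReflTransGen (fun a b => a ∈ faces ∧ b ∈ faces ∧ (a ∩ b).card = 2) t t'

namespace SphereTriangulation

variable {n : ℕ}

/-- The number of edges of a triangulation. -/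
def numEdges (T : SphereTriangulation n) : ℕ :=
  (Finset.univ.filter fun e : Finset (Fin n) => e.card = 2 ∧ ∃ t ∈ T.faces, e ⊆ t).card

/-- A diagonal flip: the edge `uv`, shared by the faces `uvx` and `uvy` where `x` and
`y` are non-adjacent, is replaced by the edge `xy`, replacing the faces `uvx, uvy`
by `xyu, xyv`. -/
def DiagonalFlip (T T' : SphereTriangulation n) : Prop :=
  ∃ u v x y : Fin n, u ≠ v ∧ x ≠ y ∧
    ({u, v, x} : Finset (Fin n)) ∈ T.faces ∧ ({u, v, y} : Finset (Fin n)) ∈ T.faces ∧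
    (¬ ∃ t ∈ T.faces, x ∈ t ∧ y ∈ t) ∧
    T'.faces = (T.faces \ {{u, v, x}, {u, v, y}}) ∪ {{x, y, u}, {x, y, v}}

/-- The standard triangulation on `n ≥ 4` vertices: two hubs `0` and `1` joined to the
path `2, 3, …, n-1`; its faces are `{0,i,i+1}` and `{1,i,i+1}` for `2 ≤ i ≤ n-2`,
together with the two faces `{0,1,2}` and `{0,1,n-1}` containing the hub edge. -/
def IsStandard (T : SphereTriangulation n) : Prop :=
  ∃ _hn : 4 ≤ n, ∀ t : Finset (Fin n), t ∈ T.faces ↔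
    ((∃ i j : Fin n, 2 ≤ (i : ℕ) ∧ (j : ℕ) = (i : ℕ) + 1 ∧
        (t = {⟨0, by omega⟩, i, j} ∨ t = {⟨1, by omega⟩, i, j})) ∨
      t = {⟨0, by omega⟩, ⟨1, by omega⟩, ⟨2, by omega⟩} ∨
      t = {⟨0, by omega⟩, ⟨1, by omega⟩, ⟨n - 1, by omega⟩})

/-- One closed component of a vertex-face tour of a triangulation. -/
def TourComp (T : SphereTriangulation n) (c : List (Fin n × Finset (Fin n))) : Prop :=
  c ≠ [] ∧ ∀ i : Fin c.length,
    (c.get i).2 ∈ T.faces ∧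
    (c.get i).1 ≠ (c.get ⟨((i : ℕ) + 1) % c.length, Nat.mod_lt _ i.pos⟩).1 ∧
    (c.get i).1 ∈ (c.get i).2 ∧
    (c.get ⟨((i : ℕ) + 1) % c.length, Nat.mod_lt _ i.pos⟩).1 ∈ (c.get i).2

/-- A spanning vertex-face tour of a triangulation: a disjoint union of closed
alternating vertex-face sequences in which every face appears exactly once. -/
def SpanningTour (T : SphereTriangulation n)
    (S : List (List (Fin n × Finset (Fin n)))) : Prop :=
  (∀ c ∈ S, T.TourComp c) ∧
  ∀ f ∈ T.faces, ∃! i : Fin S.flatten.length, (S.flatten.get i).2 = f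

/-- A Hamiltonian vertex-face tour is a connected (single-component) spanning tour. -/
def HamiltonianTour (T : SphereTriangulation n)
    (c : List (Fin n × Finset (Fin n))) : Prop :=
  T.SpanningTour [c]

end SphereTriangulation

/-!
The tour runs up the faces at the hub `0`, crosses the hub edge through `{0, 1, n-1}`, runs
back down the faces at the hub `1` and closes through `{0, 1, 2}`; the vertices at which it
enters its `2n - 4` faces are `0, 3, 4, …, n-1, 1, n-2, …, 3, 2`.
-/

namespace SphereTriangulation

variable {n : ℕ}

theorem hamiltonianTour_of_bijOn (T : SphereTriangulation n) {k : ℕ} (hk : 0 < k)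
    {w : ℕ → Fin n} {f : ℕ → Finset (Fin n)} (hwk : w k = w 0)
    (hstep : ∀ j < k, w j ≠ w (j + 1) ∧ w j ∈ f j ∧ w (j + 1) ∈ f j)
    (hf : Set.BijOn f (Set.Iio k) T.faces) :
    T.HamiltonianTour ((List.range k).map fun j => (w j, f j)) := by
  have hnext : ∀ j < k, w ((j + 1) % k) = w (j + 1) := by
    intro j hj
    rcases Nat.lt_or_ge (j + 1) k with h | h
    · rw [Nat.mod_eq_of_lt h]
    · rw [show j + 1 = k by omega, Nat.mod_self, hwk]
  refine ⟨?_, fun t ht => ?_⟩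
  · simp only [List.mem_singleton, forall_eq]
    refine ⟨by simpa using hk.ne', fun ⟨i, hi⟩ => ?_⟩
    simp only [List.length_map, List.length_range] at hi
    simp only [List.get_eq_getElem, List.getElem_map, List.getElem_range, List.length_map,
      List.length_range, hnext i hi]
    exact ⟨hf.mapsTo hi, hstep i hi⟩
  · obtain ⟨j, hj, rfl⟩ := hf.surjOn ht
    refine ⟨⟨j, by simpa using hj⟩, by simp, fun ⟨i, hi⟩ hi' => ?_⟩
    simp only [List.flatten_cons, List.flatten_nil, List.length_append, List.length_map,
      List.length_range, List.length_nil] at hi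
    simp only [List.flatten_cons, List.flatten_nil, List.get_eq_getElem, List.append_nil,
      List.getElem_map, List.getElem_range] at hi'
    exact Fin.ext (hf.injOn hi hj hi')

end SphereTriangulation

/-- The sorted vertices of the `j`-th face of the tour. -/
def standardTourTriple (n j : ℕ) : ℕ × ℕ × ℕ :=
  if j ≤ n - 4 then (0, j + 2, j + 3)
  else if j = n - 3 then (0, 1, n - 1)
  else if j ≤ 2 * n - 6 then (1, 2 * n - 4 - j, 2 * n - 3 - j)
  else (0, 1, 2)

/-- The vertex at which the tour enters its `j`-th face; at `j = 2n - 4` it is back at `0`. -/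
def standardTourVertex (n j : ℕ) : ℕ :=
  if j = 0 then 0
  else if j ≤ n - 3 then j + 2
  else if j = n - 2 then 1
  else if j < 2 * n - 4 then 2 * n - 3 - j
  else 0

def standardTourFace (n j : ℕ) : Finset (Fin n) :=
  {v | (v : ℕ) = (standardTourTriple n j).1 ∨ (v : ℕ) = (standardTourTriple n j).2.1 ∨
    (v : ℕ) = (standardTourTriple n j).2.2}

section

variable {n j : ℕ}

lemma standardTourTriple_sorted (hn : 4 ≤ n) :
    (standardTourTriple n j).1 < (standardTourTriple n j).2.1 ∧
      (standardTourTriple n j).2.1 < (standardTourTriple n j).2.2 ∧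
      (standardTourTriple n j).2.2 < n := by
  unfold standardTourTriple
  split_ifs <;> dsimp only <;> omega

lemma standardTourTriple_injOn :
    Set.InjOn (standardTourTriple n) (Set.Iio (2 * n - 4)) := by
  intro j hj j' hj' h
  simp only [Set.mem_Iio] at hj hj'
  unfold standardTourTriple at h
  split_ifs at h <;> simp only [Prod.mk.injEq] at h <;> omega

lemma standardTourTriple_of_le (h : j ≤ n - 4) : standardTourTriple n j = (0, j + 2, j + 3) :=
  if_pos h

lemma standardTourTriple_sub_three (hn : 4 ≤ n) :
    standardTourTriple n (n - 3) = (0, 1, n - 1) := by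
  rw [standardTourTriple, if_neg (by omega), if_pos rfl]

lemma standardTourTriple_of_lt_of_le (h₁ : n - 3 < j) (h₂ : j ≤ 2 * n - 6) :
    standardTourTriple n j = (1, 2 * n - 4 - j, 2 * n - 3 - j) := by
  rw [standardTourTriple, if_neg (by omega), if_neg (by omega), if_pos h₂]

lemma standardTourTriple_two_mul_sub_five (hn : 4 ≤ n) :
    standardTourTriple n (2 * n - 5) = (0, 1, 2) := by
  rw [standardTourTriple, if_neg (by omega), if_neg (by omega), if_neg (by omega)]

lemma standardTourVertex_lt (hn : 4 ≤ n) (j : ℕ) : standardTourVertex n j < n := by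
  unfold standardTourVertex
  split_ifs <;> omega

lemma standardTourVertex_two_mul_sub_four :
    standardTourVertex n (2 * n - 4) = standardTourVertex n 0 := by
  simp only [standardTourVertex]
  split_ifs <;> omega

lemma standardTourVertex_step (hn : 4 ≤ n) (hj : j < 2 * n - 4) :
    let t := standardTourTriple n j
    let v := standardTourVertex n j
    let v' := standardTourVertex n (j + 1)
    v ≠ v' ∧ (v = t.1 ∨ v = t.2.1 ∨ v = t.2.2) ∧
      (v' = t.1 ∨ v' = t.2.1 ∨ v' = t.2.2) := by
  intro t v v'
  simp only [t, v, v', standardTourTriple, standardTourVertex]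
  split_ifs <;> dsimp only at * <;> omega

lemma mem_standardTourFace {v : Fin n} :
    v ∈ standardTourFace n j ↔ (v : ℕ) = (standardTourTriple n j).1 ∨
      (v : ℕ) = (standardTourTriple n j).2.1 ∨ (v : ℕ) = (standardTourTriple n j).2.2 := by
  simp [standardTourFace]

lemma standardTourFace_eq_of_triple {a b c : Fin n}
    (h : standardTourTriple n j = ((a : ℕ), (b : ℕ), (c : ℕ))) :
    standardTourFace n j = {a, b, c} := by
  ext v
  simp [mem_standardTourFace, h, Fin.ext_iff]

lemma standardTourFace_injOn (hn : 4 ≤ n) :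
    Set.InjOn (standardTourFace n) (Set.Iio (2 * n - 4)) := by
  intro j hj j' hj' h
  refine standardTourTriple_injOn hj hj' ?_
  have hmem (v : Fin n) := mem_standardTourFace.symm.trans
    ((Finset.ext_iff.mp h v).trans mem_standardTourFace)
  obtain ⟨h₁, h₂, h₃⟩ := standardTourTriple_sorted (j := j) hn
  obtain ⟨h₁', h₂', h₃'⟩ := standardTourTriple_sorted (j := j') hn
  have e₁ := hmem ⟨_, h₁.trans (h₂.trans h₃)⟩
  have e₂ := hmem ⟨_, h₂.trans h₃⟩
  have e₃ := hmem ⟨_, h₃⟩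
  simp only [true_or, or_true, true_iff] at e₁ e₂ e₃
  ext <;> omega

end

namespace SphereTriangulation

variable {n : ℕ}

theorem IsStandard.bijOn_standardTourFace {T : SphereTriangulation n} (hT : T.IsStandard) :
    Set.BijOn (standardTourFace n) (Set.Iio (2 * n - 4)) T.faces := by
  obtain ⟨hn, hfaces⟩ := hT
  refine ⟨fun j hj => ?_, standardTourFace_injOn hn, fun t ht => ?_⟩
  · rw [Set.mem_Iio] at hj
    rw [Finset.mem_coe, hfaces]
    rcases (show j ≤ n - 4 ∨ j = n - 3 ∨ (n - 3 < j ∧ j ≤ 2 * n - 6) ∨ j = 2 * n - 5 by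
      omega) with h | rfl | ⟨h₁, h₂⟩ | rfl
    · exact Or.inl ⟨⟨j + 2, by omega⟩, ⟨j + 3, by omega⟩, le_add_self, rfl,
        Or.inl (standardTourFace_eq_of_triple (standardTourTriple_of_le h))⟩
    · exact Or.inr (Or.inr (standardTourFace_eq_of_triple (standardTourTriple_sub_three hn)))
    · refine Or.inl ⟨⟨2 * n - 4 - j, by omega⟩, ⟨2 * n - 3 - j, by omega⟩, ?_, ?_,
        Or.inr (standardTourFace_eq_of_triple (standardTourTriple_of_lt_of_le h₁ h₂))⟩ <;>
      simp only <;> omega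
    · exact Or.inr (Or.inl
        (standardTourFace_eq_of_triple (standardTourTriple_two_mul_sub_five hn)))
  · rw [Finset.mem_coe, hfaces] at ht
    rcases ht with ⟨i, i', hi, hi', rfl | rfl⟩ | rfl | rfl
    · have := i'.isLt
      refine ⟨i - 2, Set.mem_Iio.mpr (by omega), standardTourFace_eq_of_triple ?_⟩
      rw [standardTourTriple_of_le (by omega)]
      simp only [Prod.mk.injEq, true_and]
      omega
    · have := i'.isLt
      refine ⟨2 * n - 4 - i, Set.mem_Iio.mpr (by omega), standardTourFace_eq_of_triple ?_⟩
      rw [standardTourTriple_of_lt_of_le (by omega) (by omega)]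
      simp only [Prod.mk.injEq, true_and]
      omega
    · exact ⟨2 * n - 5, Set.mem_Iio.mpr (by omega),
        standardTourFace_eq_of_triple (standardTourTriple_two_mul_sub_five hn)⟩
    · exact ⟨n - 3, Set.mem_Iio.mpr (by omega),
        standardTourFace_eq_of_triple (standardTourTriple_sub_three hn)⟩

end SphereTriangulation

theorem stmt_10_general (n : ℕ) (T : SphereTriangulation n)
    (hstd : T.IsStandard) :
    ∃ c : List (Fin n × Finset (Fin n)), T.HamiltonianTour c := by
  have hn : 4 ≤ n := hstd.fst
  refine ⟨_, T.hamiltonianTour_of_bijOn (w := fun j => ⟨_, standardTourVertex_lt hn j⟩)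
    (by omega) (Fin.ext standardTourVertex_two_mul_sub_four) (fun j hj => ?_)
    hstd.bijOn_standardTourFace⟩
  simpa only [ne_eq, Fin.ext_iff, mem_standardTourFace] using standardTourVertex_step hn hj

/-- The standard triangulation on `n ≥ 4` vertices admits a
Hamiltonian vertex-face tour: a single closed alternating sequence of vertices and
faces in which every face appears exactly once and consecutive vertices flanking each
face are distinct vertices incident to that face. -/
theorem stmt_10 (n : ℕ) (hn : 4 ≤ n) (T : SphereTriangulation n)
    (hstd : T.IsStandard) :
    ∃ c : List (Fin n × Finset (Fin n)), T.HamiltonianTour c :=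
  stmt_10_general n T hstd
end
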